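/- With the same operators A, B, C, D as built from the free fermion six vertex weights, the following relations hold for any x, z: (i) B(z, √(z/x)) D(x, √(x/z)) + D(z, √(z/x)) B(x, √(x/z)) = 0; (ii) D(z, √(z/x)) C(x, √(x/z)) = C(z, √(z/x)) D(x, √(x/z)); (iii) B(x, t) B(z, √(z/x)) = 0 for any t. Here the notation means that the r-parameter of each operator is set so that r^2 equals the ratio of its x-parameter to the other spectral parameter. -/

import Mathlib

noncomputable section

/-- The free fermion six vertex weights `W(i₁,j₁;i₂,j₂ | x;y;r;s)`, parameterized
by `r2 = r²` (the parameter `r` enters the weights only through `r²`, so for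
`r = √(x/z)` no branch choice matters).  Weights are zero unless
`i₁ + j₁ = i₂ + j₂`. -/
def W6sq (x y r2 s : ℂ) : Bool → Bool → Bool → Bool → ℂ
  | false, false, false, false => 1
  | true, true, true, true => (r2⁻¹ * x - y) / ((s ^ 2)⁻¹ * y - x)
  | true, false, true, false => ((s ^ 2)⁻¹ * y - r2⁻¹ * x) / ((s ^ 2)⁻¹ * y - x)
  | false, true, false, true => (y - x) / ((s ^ 2)⁻¹ * y - x)
  | true, false, false, true => x * (r2⁻¹ - 1) / ((s ^ 2)⁻¹ * y - x)
  | false, true, true, false => y * ((s ^ 2)⁻¹ - 1) / ((s ^ 2)⁻¹ * y - x)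
  | _, _, _, _ => 0

/-- The row operator (with spectral parameter `x`, spin parameter squared `r2`)
on the `n`-fold tensor product `V^{(1)} ⊗ ⋯ ⊗ V^{(n)}` (identified with
`(Fin n → Bool) → ℂ`), with left horizontal boundary `a` and right boundary `b`:
`A = rowOp … true true`, `B = rowOp … false true`,
`C = rowOp … true false`, `D = rowOp … false false`.  This reproduces the
recursive coproduct extension of the single-site operators
`A e_i = W(i,1;i,1) e_i`, `B e_i = W(i,0;i-1,1) e_{i-1}`,
`C e_i = W(i,1;i+1,0) e_{i+1}`, `D e_i = W(i,0;i,0) e_i`. -/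
def rowOpSq (n : ℕ) (y s : Fin n → ℂ) (x r2 : ℂ) (a b : Bool) :
    Matrix (Fin n → Bool) (Fin n → Bool) ℂ :=
  Matrix.of fun mOut mIn =>
    ∑ h : Fin (n + 1) → Bool,
      if h 0 = a ∧ h (Fin.last n) = b then
        ∏ c : Fin n, W6sq x (y c) r2 (s c) (mIn c) (h c.castSucc) (mOut c) (h c.succ)
      else 0

/-!
A product of two row operators is an entry of the ordered product over the sites of the `4 × 4`
double-row matrices `doubleRowSite`. At the special spectral parameters every site matrix
preserves a small subspace: the one spanned by the column vector `e (false,true) + e (true,false)`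
for (i), by the row vector `e (false,true) - e (true,false)` for (ii), and by the row vector
`e (false,false)` and its images for (iii). Hence so does the whole product, and the coordinate
that each relation reads off vanishes on that subspace.
-/

open Matrix

namespace Matrix

variable {H R : Type*} [Fintype H] [DecidableEq H]

theorem dotProduct_list_ofFn_prod_mulVec [CommSemiring R] (n : ℕ) (w : Fin n → Matrix H H R)
    (u v : H → R) :
    u ⬝ᵥ ((List.ofFn w).prod *ᵥ v) =
      ∑ h : Fin (n + 1) → H,
        u (h 0) * (∏ c : Fin n, w c (h c.castSucc) (h c.succ)) * v (h (Fin.last n)) := by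
  induction n generalizing u with
  | zero =>
    rw [← (Equiv.funUnique (Fin 1) H).symm.sum_comp]
    simp [dotProduct]
  | succ n ih =>
    rw [List.ofFn_succ, List.prod_cons, ← mulVec_mulVec, dotProduct_mulVec, ih]
    conv_rhs => rw [← (Fin.consEquiv fun _ => H).sum_comp, Fintype.sum_prod_type, Finset.sum_comm]
    refine Finset.sum_congr rfl fun g _ => ?_
    simp [vecMul, dotProduct, Fin.prod_univ_succ, Finset.sum_mul, mul_assoc]

theorem list_ofFn_prod_apply [CommSemiring R] (n : ℕ) (w : Fin n → Matrix H H R) (a b : H) :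
    (List.ofFn w).prod a b =
      ∑ h : Fin (n + 1) → H,
        if h 0 = a ∧ h (Fin.last n) = b then ∏ c : Fin n, w c (h c.castSucc) (h c.succ)
        else 0 := by
  have h := dotProduct_list_ofFn_prod_mulVec n w (Pi.single a (1 : R)) (Pi.single b 1)
  simp only [single_one_dotProduct, mulVec_single_one, col_apply] at h
  rw [h]
  refine Finset.sum_congr rfl fun h _ => ?_
  simp only [Pi.single_apply, ite_and]
  split_ifs <;> simp

theorem list_prod_mulVec_induction [Semiring R] {P : (H → R) → Prop}
    {L : List (Matrix H H R)} (hL : ∀ M ∈ L, ∀ v, P v → P (M *ᵥ v)) {v : H → R} (hv : P v) :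
    P (L.prod *ᵥ v) :=
  List.prod_induction (fun M => ∀ v, P v → P (M *ᵥ v))
    (fun A B hA hB v hv => by rw [← mulVec_mulVec]; exact hA _ (hB v hv))
    (fun v hv => by rwa [one_mulVec]) hL v hv

theorem vecMul_list_prod_induction [Semiring R] {P : (H → R) → Prop}
    {L : List (Matrix H H R)} (hL : ∀ M ∈ L, ∀ v, P v → P (v ᵥ* M)) {v : H → R} (hv : P v) :
    P (v ᵥ* L.prod) :=
  List.prod_induction (fun M => ∀ v, P v → P (v ᵥ* M))
    (fun A B hA hB v hv => by rw [← vecMul_vecMul]; exact hB _ (hA v hv))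
    (fun v hv => by rwa [vecMul_one]) hL v hv

end Matrix

/-- The site matrix of `R(x₁, r₁) * R(x₂, r₂)`: its index is the pair (top, bottom) of horizontal
edges, and `m` is the vertical edge between the two rows. -/
def doubleRowSite (x₁ r₁ x₂ r₂ y s : ℂ) (mo mi : Bool) : Matrix (Bool × Bool) (Bool × Bool) ℂ :=
  of fun j j' => ∑ m, W6sq x₁ y r₁ s m j.1 mo j'.1 * W6sq x₂ y r₂ s mi j.2 m j'.2

theorem rowOpSq_mul_rowOpSq_apply (n : ℕ) (y s : Fin n → ℂ) (x₁ r₁ x₂ r₂ : ℂ) (a b c d : Bool)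
    (mO mI : Fin n → Bool) :
    (rowOpSq n y s x₁ r₁ a b * rowOpSq n y s x₂ r₂ c d) mO mI =
      (List.ofFn fun k => doubleRowSite x₁ r₁ x₂ r₂ (y k) (s k) (mO k) (mI k)).prod
        (a, c) (b, d) := by
  rw [list_ofFn_prod_apply, ← (Equiv.arrowProdEquivProdArrow _ _ _).symm.sum_comp,
    Fintype.sum_prod_type]
  simp only [mul_apply, rowOpSq, of_apply, Finset.sum_mul_sum]
  rw [Finset.sum_comm]
  refine Finset.sum_congr rfl fun h₁ _ => ?_
  rw [Finset.sum_comm]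
  refine Finset.sum_congr rfl fun h₂ _ => ?_
  simp only [Equiv.arrowProdEquivProdArrow, Equiv.coe_fn_symm_mk, Prod.mk.injEq, doubleRowSite,
    of_apply, Fintype.prod_sum, ite_zero_mul_ite_zero, ← Finset.prod_mul_distrib,
    Finset.sum_ite_irrel, Finset.sum_const_zero, and_and_and_comm]

def IsOneParticle (ε : ℂ) (v : Bool × Bool → ℂ) : Prop :=
  v (false, false) = 0 ∧ v (true, true) = 0 ∧ v (false, true) = ε * v (true, false)

/-- Generically the span of `e (false, false)` and
`(x - z) e (false, true) + x (r⁻¹ - 1) e (true, false)`; when the latter vector vanishes it is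
the hyperplane `v (true, true) = 0`, which is still invariant. -/
def IsVacuumSector (x z r : ℂ) (v : Bool × Bool → ℂ) : Prop :=
  v (true, true) = 0 ∧ x * (r⁻¹ - 1) * v (false, true) = (x - z) * v (true, false)

section Site

variable {x z y s : ℂ}

theorem IsOneParticle.doubleRowSite_mulVec (hx : x ≠ 0) (hz : z ≠ 0)
    (hdx : (s ^ 2)⁻¹ * y - x ≠ 0) (hdz : (s ^ 2)⁻¹ * y - z ≠ 0) (mo mi : Bool)
    {v : Bool × Bool → ℂ} (hv : IsOneParticle 1 v) :
    IsOneParticle 1 (doubleRowSite z (z / x) x (x / z) y s mo mi *ᵥ v) := by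
  obtain ⟨hff, htt, hft⟩ := hv
  simp only [IsOneParticle, mulVec, dotProduct, Fintype.sum_prod_type, Fintype.sum_bool,
    doubleRowSite, of_apply, hff, htt, hft, W6sq]
  generalize (s ^ 2)⁻¹ = w at *
  cases mo <;> cases mi <;> simp <;> field_simp <;> ring

theorem IsOneParticle.vecMul_doubleRowSite (hx : x ≠ 0) (hz : z ≠ 0)
    (hdx : (s ^ 2)⁻¹ * y - x ≠ 0) (hdz : (s ^ 2)⁻¹ * y - z ≠ 0) (mo mi : Bool)
    {v : Bool × Bool → ℂ} (hv : IsOneParticle (-1) v) :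
    IsOneParticle (-1) (v ᵥ* doubleRowSite z (z / x) x (x / z) y s mo mi) := by
  obtain ⟨hff, htt, hft⟩ := hv
  simp only [IsOneParticle, vecMul, dotProduct, Fintype.sum_prod_type, Fintype.sum_bool,
    doubleRowSite, of_apply, hff, htt, hft, W6sq]
  generalize (s ^ 2)⁻¹ = w at *
  have hdx' : y * w - x ≠ 0 := by rwa [mul_comm]
  have hdz' : y * w - z ≠ 0 := by rwa [mul_comm]
  cases mo <;> cases mi <;> simp <;> field_simp <;> ring

theorem IsVacuumSector.vecMul_doubleRowSite (hx : x ≠ 0) (hz : z ≠ 0)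
    (hdx : (s ^ 2)⁻¹ * y - x ≠ 0) (hdz : (s ^ 2)⁻¹ * y - z ≠ 0) (mo mi : Bool) (r : ℂ)
    {v : Bool × Bool → ℂ} (hv : IsVacuumSector x z r v) :
    IsVacuumSector x z r (v ᵥ* doubleRowSite x r z (z / x) y s mo mi) := by
  obtain ⟨htt, hp⟩ := hv
  simp only [IsVacuumSector, vecMul, dotProduct, Fintype.sum_prod_type, Fintype.sum_bool,
    doubleRowSite, of_apply, htt, W6sq]
  generalize (s ^ 2)⁻¹ = w at *
  generalize r⁻¹ = ri at *
  have hdx' : y * w - x ≠ 0 := by rwa [mul_comm]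
  have hdz' : y * w - z ≠ 0 := by rwa [mul_comm]
  cases mo <;> cases mi <;> simp <;> field_simp
  · linear_combination (y * w - z) * (y - x) * hp
  · exact ⟨by linear_combination (x - y) * hp, trivial⟩
  · linear_combination (x - y) * (y * w - x * ri) * hp

end Site

section SpecialParameters

variable {n : ℕ} {y s : Fin n → ℂ} {x z : ℂ}

theorem rowOpSq_B_mul_D_add_D_mul_B (hx : x ≠ 0) (hz : z ≠ 0)
    (hdx : ∀ c, (s c ^ 2)⁻¹ * y c - x ≠ 0) (hdz : ∀ c, (s c ^ 2)⁻¹ * y c - z ≠ 0) :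
    rowOpSq n y s z (z / x) false true * rowOpSq n y s x (x / z) false false +
      rowOpSq n y s z (z / x) false false * rowOpSq n y s x (x / z) false true = 0 := by
  ext mO mI
  have hv := list_prod_mulVec_induction (P := IsOneParticle 1)
    (v := Pi.single (false, true) 1 + Pi.single (true, false) 1)
    (List.forall_mem_ofFn_iff.2 fun k _ =>
      IsOneParticle.doubleRowSite_mulVec hx hz (hdx k) (hdz k) (mO k) (mI k))
    ⟨by simp, by simp, by simp⟩
  simpa [mulVec_add, rowOpSq_mul_rowOpSq_apply, add_comm] using hv.1

theorem rowOpSq_D_mul_C_eq_C_mul_D (hx : x ≠ 0) (hz : z ≠ 0)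
    (hdx : ∀ c, (s c ^ 2)⁻¹ * y c - x ≠ 0) (hdz : ∀ c, (s c ^ 2)⁻¹ * y c - z ≠ 0) :
    rowOpSq n y s z (z / x) false false * rowOpSq n y s x (x / z) true false =
      rowOpSq n y s z (z / x) true false * rowOpSq n y s x (x / z) false false := by
  ext mO mI
  have hu := vecMul_list_prod_induction (P := IsOneParticle (-1))
    (v := Pi.single (false, true) 1 - Pi.single (true, false) 1)
    (List.forall_mem_ofFn_iff.2 fun k _ =>
      IsOneParticle.vecMul_doubleRowSite hx hz (hdx k) (hdz k) (mO k) (mI k))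
    ⟨by simp, by simp, by simp⟩
  simpa [sub_vecMul, rowOpSq_mul_rowOpSq_apply, sub_eq_zero] using hu.1

theorem rowOpSq_B_mul_B_eq_zero (hx : x ≠ 0) (hz : z ≠ 0)
    (hdx : ∀ c, (s c ^ 2)⁻¹ * y c - x ≠ 0) (hdz : ∀ c, (s c ^ 2)⁻¹ * y c - z ≠ 0) (r : ℂ) :
    rowOpSq n y s x r false true * rowOpSq n y s z (z / x) false true = 0 := by
  ext mO mI
  have he := vecMul_list_prod_induction (P := IsVacuumSector x z r)
    (v := Pi.single (false, false) 1)
    (List.forall_mem_ofFn_iff.2 fun k _ =>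
      IsVacuumSector.vecMul_doubleRowSite hx hz (hdx k) (hdz k) (mO k) (mI k) r)
    ⟨rfl, by simp⟩
  simpa [rowOpSq_mul_rowOpSq_apply] using he.1

end SpecialParameters

theorem special_parameter_relations_general (n : ℕ) (y s : Fin n → ℂ) (x z t : ℂ)
    (hx : x ≠ 0) (hz : z ≠ 0)
    (hd1 : ∀ c, (s c ^ 2)⁻¹ * y c - x ≠ 0)
    (hd2 : ∀ c, (s c ^ 2)⁻¹ * y c - z ≠ 0) :
    (rowOpSq n y s z (z / x) false true * rowOpSq n y s x (x / z) false false +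
        rowOpSq n y s z (z / x) false false * rowOpSq n y s x (x / z) false true = 0) ∧
      (rowOpSq n y s z (z / x) false false * rowOpSq n y s x (x / z) true false =
        rowOpSq n y s z (z / x) true false * rowOpSq n y s x (x / z) false false) ∧
      rowOpSq n y s x (t ^ 2) false true * rowOpSq n y s z (z / x) false true = 0 :=
  ⟨rowOpSq_B_mul_D_add_D_mul_B hx hz hd1 hd2, rowOpSq_D_mul_C_eq_C_mul_D hx hz hd1 hd2,
    rowOpSq_B_mul_B_eq_zero hx hz hd1 hd2 (t ^ 2)⟩

/-- Simplified relations at special parameter values `r = √(z/x)`, `r = √(x/z)`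
(entering only through `r² = z/x` resp. `x/z`):
(i)  `B(z,√(z/x)) D(x,√(x/z)) + D(z,√(z/x)) B(x,√(x/z)) = 0`;
(ii) `D(z,√(z/x)) C(x,√(x/z)) = C(z,√(z/x)) D(x,√(x/z))`;
(iii) `B(x,t) B(z,√(z/x)) = 0` for any `t`. -/
theorem special_parameter_relations (n : ℕ) (y s : Fin n → ℂ) (x z t : ℂ)
    (hx : x ≠ 0) (hz : z ≠ 0) (ht : t ≠ 0)
    (hs : ∀ c, s c ≠ 0)
    (hd1 : ∀ c, (s c ^ 2)⁻¹ * y c - x ≠ 0)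
    (hd2 : ∀ c, (s c ^ 2)⁻¹ * y c - z ≠ 0) :
    (rowOpSq n y s z (z / x) false true * rowOpSq n y s x (x / z) false false +
        rowOpSq n y s z (z / x) false false * rowOpSq n y s x (x / z) false true = 0) ∧
      (rowOpSq n y s z (z / x) false false * rowOpSq n y s x (x / z) true false =
        rowOpSq n y s z (z / x) true false * rowOpSq n y s x (x / z) false false) ∧
      rowOpSq n y s x (t ^ 2) false true * rowOpSq n y s z (z / x) false true = 0 :=
  special_parameter_relations_general n y s x z t hx hz hd1 hd2

end
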